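/- arXiv:math/0411590 — 4 statements merged into one kernel-verified Lean document; each statement's English description precedes it below -/
import Mathlib

section
/- With the Zhang relaxation map f as above, ‖f(x)‖₁ = ‖x‖₁ if and only if x_i ≤ E_c for all boundary sites i ∈ ∂Λ. Moreover, if there is a boundary site i ∈ ∂Λ with x_i > E_c, then ‖f(x)‖₁ ≤ ‖x‖₁ − ((1−ε)/(2d))·E_c. -/
open Finset

/-- Sites of the lattice cube `[1,L]^d ⊆ ℤ^d`. -/
abbrev Site (d L : ℕ) := Fin d → Fin L

/-- Manhattan metric on the lattice. -/
def dLam {d L : ℕ} (i j : Site d L) : ℕ :=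
  ∑ n : Fin d, ((i n : ℤ) - (j n : ℤ)).natAbs

/-- Heaviside function: `θ a = 1` if `a > 0`, else `0`. -/
noncomputable def theta (a : ℝ) : ℝ := if 0 < a then 1 else 0

/-- The Zhang relaxation map. -/
noncomputable def zhangF (d L : ℕ) (Ec ε : ℝ) (x : Site d L → ℝ) : Site d L → ℝ :=
  fun i => x i - theta (x i - Ec) * (1 - ε) * x i
    + ((1 - ε) / (2 * d)) * ∑ j ∈ univ.filter (fun j => dLam i j = 1), theta (x j - Ec) * x j

/-- 1-norm of a configuration. -/
noncomputable def norm1 {d L : ℕ} (x : Site d L → ℝ) : ℝ := ∑ i, |x i|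

/-- The boundary of the lattice: sites with fewer than `2d` nearest neighbors. -/
def isBoundary {d L : ℕ} (i : Site d L) : Prop :=
  (univ.filter (fun j => dLam i j = 1)).card < 2 * d

/-!
Write `g j = θ(x j - E_c) x j` for the mass shed by site `j`. Site `j` keeps
`x j - (1 - ε) g j ≥ 0` and each of its neighbours receives `(1 - ε) g j / (2d)`; since the
neighbour relation is symmetric, summing over the lattice gives
`‖f x‖₁ = ‖x‖₁ - (1 - ε) / (2d) · ∑ j, (2d - deg j) g j`.
The weight `2d - deg j` is positive exactly on the boundary, and `g j ≠ 0` exactly when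
`x j > E_c`, which gives the equivalence; a boundary site with `x i > E_c` alone contributes
`(2d - deg i) x i ≥ E_c`.
-/

noncomputable def toppled (Ec a : ℝ) : ℝ := theta (a - Ec) * a

theorem toppled_of_le {Ec a : ℝ} (h : a ≤ Ec) : toppled Ec a = 0 := by
  simp [toppled, theta, h]

theorem toppled_of_lt {Ec a : ℝ} (h : Ec < a) : toppled Ec a = a := by
  simp [toppled, theta, h]

theorem toppled_nonneg {Ec : ℝ} (hEc : 0 ≤ Ec) (a : ℝ) : 0 ≤ toppled Ec a := by
  rcases le_or_gt a Ec with h | h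
  · simp [toppled_of_le h]
  · rw [toppled_of_lt h]
    linarith

theorem toppled_le_self (Ec : ℝ) {a : ℝ} (ha : 0 ≤ a) : toppled Ec a ≤ a := by
  rcases le_or_gt a Ec with h | h
  · simpa [toppled_of_le h]
  · simp [toppled_of_lt h]

theorem toppled_eq_zero_iff {Ec a : ℝ} (hEc : 0 ≤ Ec) : toppled Ec a = 0 ↔ a ≤ Ec := by
  refine ⟨fun h => ?_, toppled_of_le⟩
  by_contra! hlt
  rw [toppled_of_lt hlt] at h
  linarith

namespace SimpleGraph

variable {V : Type*} [Fintype V] (G : SimpleGraph V) [DecidableRel G.Adj]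

theorem sum_sum_neighborFinset {M : Type*} [AddCommMonoid M] (g : V → M) :
    ∑ i, ∑ j ∈ G.neighborFinset i, g j = ∑ j, G.degree j • g j := by
  rw [Finset.sum_comm' (t' := univ) (s' := fun j => G.neighborFinset j)
    (fun i j => by simp [G.adj_comm])]
  simp only [Finset.sum_const, card_neighborFinset_eq_degree]

theorem sum_shed_add_neighbor_share (x g : V → ℝ) {c D : ℝ} (hD : D ≠ 0) :
    ∑ i, (x i - c * g i + c / D * ∑ j ∈ G.neighborFinset i, g j)
      = ∑ i, x i - c / D * ∑ j, (D - G.degree j) * g j := by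
  simp only [sum_add_distrib, sum_sub_distrib, ← mul_sum, sum_sum_neighborFinset, nsmul_eq_mul,
    sub_mul]
  field_simp
  ring

variable {D : ℕ} {Ec : ℝ}

theorem degree_gap_mul_toppled_nonneg {j : V} (hj : G.degree j ≤ D) (hEc : 0 ≤ Ec) (a : ℝ) :
    0 ≤ ((D : ℝ) - G.degree j) * toppled Ec a :=
  mul_nonneg (sub_nonneg.mpr (by exact_mod_cast hj)) (toppled_nonneg hEc a)

theorem sum_mul_toppled_eq_zero_iff (hdeg : ∀ j, G.degree j ≤ D) (hEc : 0 ≤ Ec)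
    (x : V → ℝ) :
    ∑ j, ((D : ℝ) - G.degree j) * toppled Ec (x j) = 0 ↔
      ∀ j, G.degree j < D → x j ≤ Ec := by
  rw [sum_eq_zero_iff_of_nonneg fun j _ => G.degree_gap_mul_toppled_nonneg (hdeg j) hEc _]
  simp only [mem_univ, true_implies]
  refine forall_congr' fun j => ?_
  rw [mul_eq_zero, sub_eq_zero, Nat.cast_inj, toppled_eq_zero_iff hEc, (hdeg j).lt_iff_ne,
    or_iff_not_imp_left, eq_comm]

theorem le_sum_mul_toppled (hdeg : ∀ j, G.degree j ≤ D) (hEc : 0 ≤ Ec) {x : V → ℝ} {i : V}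
    (hi : G.degree i < D) (hxi : Ec < x i) :
    Ec ≤ ∑ j, ((D : ℝ) - G.degree j) * toppled Ec (x j) := by
  have hgap : (1 : ℝ) ≤ D - G.degree i := by
    rw [le_sub_iff_add_le', ← Nat.cast_succ]
    exact_mod_cast hi
  calc Ec ≤ x i := hxi.le
    _ ≤ ((D : ℝ) - G.degree i) * toppled Ec (x i) := by
        rw [toppled_of_lt hxi]
        nlinarith
    _ ≤ _ := single_le_sum (fun j _ => G.degree_gap_mul_toppled_nonneg (hdeg j) hEc _)
        (mem_univ i)

end SimpleGraph

theorem dLam_comm {d L : ℕ} (i j : Site d L) : dLam i j = dLam j i := by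
  unfold dLam
  congr 1 with n
  rw [← Int.natAbs_neg, neg_sub]

theorem dLam_self {d L : ℕ} (i : Site d L) : dLam i i = 0 := by
  simp [dLam]

def latticeGraph (d L : ℕ) : SimpleGraph (Site d L) where
  Adj i j := dLam i j = 1
  symm := ⟨fun i j h => (dLam_comm j i).trans h⟩
  loopless := ⟨fun i h => by simp [dLam_self] at h⟩

instance (d L : ℕ) : DecidableRel (latticeGraph d L).Adj :=
  fun i j => inferInstanceAs (Decidable (dLam i j = 1))

theorem latticeGraph_neighborFinset {d L : ℕ} (i : Site d L) :
    (latticeGraph d L).neighborFinset i = univ.filter (fun j => dLam i j = 1) :=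
  SimpleGraph.neighborFinset_eq_filter _

theorem isBoundary_iff_degree_lt {d L : ℕ} (i : Site d L) :
    isBoundary i ↔ (latticeGraph d L).degree i < 2 * d := by
  rw [isBoundary, ← latticeGraph_neighborFinset, SimpleGraph.card_neighborFinset_eq_degree]

theorem exists_eq_pi_single_of_sum_natAbs_eq_one {ι : Type*} [Fintype ι] [DecidableEq ι]
    {v : ι → ℤ} (hv : ∑ n, (v n).natAbs = 1) :
    ∃ n, (v n).natAbs = 1 ∧ v = Pi.single n (v n) := by
  obtain ⟨n, -, hn⟩ := exists_ne_zero_of_sum_ne_zero (s := univ) (f := fun n => (v n).natAbs)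
    (by omega)
  rw [← add_sum_erase _ _ (mem_univ n)] at hv
  have hrest : ∑ m ∈ univ.erase n, (v m).natAbs = 0 := by omega
  refine ⟨n, by omega, funext fun m => ?_⟩
  rcases eq_or_ne m n with rfl | hm
  · simp
  · simpa [hm] using (sum_eq_zero_iff.mp hrest) m (by simp [hm])

theorem latticeGraph_degree_le {d L : ℕ} (i : Site d L) :
    (latticeGraph d L).degree i ≤ 2 * d := by
  let units : Finset (Fin d → ℤ) := (univ ×ˢ {1, -1}).image fun p => Pi.single p.1 p.2
  calc (latticeGraph d L).degree i
      = #(univ.filter fun j => dLam i j = 1) := by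
        rw [← SimpleGraph.card_neighborFinset_eq_degree, latticeGraph_neighborFinset]
    _ ≤ #units := by
        refine card_le_card_of_injOn (fun j n => (i n : ℤ) - j n) (fun j hj => ?_) ?_
        · obtain ⟨n, h1, hsingle⟩ :=
            exists_eq_pi_single_of_sum_natAbs_eq_one (mem_filter.mp hj).2
          refine mem_image.mpr ⟨(n, _), ?_, hsingle.symm⟩
          simpa [Int.natAbs_eq_iff] using h1
        · intro j _ j' _ h
          funext n
          exact Fin.ext (by simpa using congrFun h n)
    _ ≤ 2 * d := by
        refine card_image_le.trans ?_
        simp [card_product, mul_comm]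

theorem norm1_of_nonneg {d L : ℕ} {x : Site d L → ℝ} (hx : ∀ i, 0 ≤ x i) :
    norm1 x = ∑ i, x i :=
  sum_congr rfl fun i _ => abs_of_nonneg (hx i)

section Zhang

variable {d L : ℕ} {Ec ε : ℝ} {x : Site d L → ℝ}

theorem zhangF_apply (i : Site d L) :
    zhangF d L Ec ε x i = x i - (1 - ε) * toppled Ec (x i)
      + (1 - ε) / (2 * d) * ∑ j ∈ (latticeGraph d L).neighborFinset i, toppled Ec (x j) := by
  rw [latticeGraph_neighborFinset, zhangF, toppled, mul_assoc, mul_left_comm]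
  rfl

theorem zhangF_nonneg (hEc : 0 ≤ Ec) (hε0 : 0 ≤ ε) (hε1 : ε ≤ 1) (hx : ∀ i, 0 ≤ x i)
    (i : Site d L) : 0 ≤ zhangF d L Ec ε x i := by
  have hshed : (1 - ε) * toppled Ec (x i) ≤ x i :=
    calc (1 - ε) * toppled Ec (x i) ≤ 1 * toppled Ec (x i) := by
          gcongr
          · exact toppled_nonneg hEc _
          · linarith
      _ ≤ x i := by simpa using toppled_le_self Ec (hx i)
  have hgain : 0 ≤ (1 - ε) / (2 * d) * ∑ j ∈ (latticeGraph d L).neighborFinset i,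
      toppled Ec (x j) :=
    mul_nonneg (div_nonneg (by linarith) (by positivity))
      (sum_nonneg fun j _ => toppled_nonneg hEc _)
  rw [zhangF_apply]
  linarith

theorem norm1_zhangF (hd : 0 < d) (hEc : 0 ≤ Ec) (hε0 : 0 ≤ ε) (hε1 : ε ≤ 1)
    (hx : ∀ i, 0 ≤ x i) :
    norm1 (zhangF d L Ec ε x) = norm1 x - (1 - ε) / (2 * d)
      * ∑ j, (((2 * d : ℕ) : ℝ) - (latticeGraph d L).degree j) * toppled Ec (x j) := by
  rw [norm1_of_nonneg (zhangF_nonneg hEc hε0 hε1 hx), norm1_of_nonneg hx]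
  simp_rw [zhangF_apply]
  push_cast
  exact (latticeGraph d L).sum_shed_add_neighbor_share x _ (by positivity)

end Zhang

theorem zhang_relaxation_norm_eq_iff_general
    (d L : ℕ) (hd : 0 < d)
    (Ec ε : ℝ) (hEc : 0 < Ec) (hε0 : 0 ≤ ε) (hε1 : ε < 1)
    (x : Site d L → ℝ) (hx : ∀ i, 0 ≤ x i) :
    (norm1 (zhangF d L Ec ε x) = norm1 x ↔ ∀ i, isBoundary i → x i ≤ Ec) ∧
      ((∃ i, isBoundary i ∧ Ec < x i) →
        norm1 (zhangF d L Ec ε x) ≤ norm1 x - (1 - ε) / (2 * d) * Ec) := by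
  have hrate : 0 < (1 - ε) / (2 * d) := div_pos (by linarith) (by positivity)
  have hdeg := latticeGraph_degree_le (d := d) (L := L)
  rw [norm1_zhangF hd hEc.le hε0 hε1.le hx]
  simp_rw [isBoundary_iff_degree_lt]
  refine ⟨?_, fun ⟨i, hi, hxi⟩ => ?_⟩
  · rw [sub_eq_self, mul_eq_zero, or_iff_right hrate.ne']
    exact (latticeGraph d L).sum_mul_toppled_eq_zero_iff hdeg hEc.le x
  · have := (latticeGraph d L).le_sum_mul_toppled hdeg hEc.le hi hxi
    gcongr

theorem zhang_relaxation_norm_eq_iff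
    (d L : ℕ) (hd : 0 < d) (hL : 0 < L)
    (Ec ε : ℝ) (hEc : 0 < Ec) (hε0 : 0 ≤ ε) (hε1 : ε < 1)
    (x : Site d L → ℝ) (hx : ∀ i, 0 ≤ x i) :
    (norm1 (zhangF d L Ec ε x) = norm1 x ↔ ∀ i, isBoundary i → x i ≤ Ec) ∧
      ((∃ i, isBoundary i ∧ Ec < x i) →
        norm1 (zhangF d L Ec ε x) ≤ norm1 x - (1 - ε) / (2 * d) * Ec) :=
  zhang_relaxation_norm_eq_iff_general d L hd Ec ε hEc hε0 hε1 x hx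
end

section
/- For every x ∈ ℝ_{≥0}^N, the matrix identity f(x) = S(x)·x holds, where S(x) = J(x) + (1−ε)Q(x), Q_{kl}(x) = (1/(2d))θ(x_l − E_c) if d_Λ(k,l)=1 and 0 otherwise, and J(x) is the diagonal matrix with J_{ll}(x) = 1 − (1−ε)θ(x_l − E_c). Moreover every column of S(x) has 1-norm at most 1. -/
/-!
The identity `f(x) = S(x) x` is a rearrangement of the definition of `f`. For the column bound,
`0 ≤ ε < 1` makes every entry of `S(x)` nonnegative, and the `k`-th column sums to
`1 - (1-ε) θ_k + (1-ε) θ_k n_k / (2d)`, where `n_k` is the number of lattice neighbours of `k`.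
A neighbour differs from `k` in exactly one coordinate, and there by `±1`, so `n_k ≤ 2d`.
-/

open Finset

open Matrix

/-- The matrix `Q(x)`. -/
noncomputable def Qmat (d L : ℕ) (Ec : ℝ) (x : Site d L → ℝ) :
    Matrix (Site d L) (Site d L) ℝ :=
  fun k l => if dLam k l = 1 then (1 / (2 * d)) * theta (x l - Ec) else 0

/-- The diagonal matrix `J(x)`. -/
noncomputable def Jmat (d L : ℕ) (Ec ε : ℝ) (x : Site d L → ℝ) :
    Matrix (Site d L) (Site d L) ℝ :=
  Matrix.diagonal (fun l => 1 - (1 - ε) * theta (x l - Ec))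

/-- The one-step relaxation matrix `S(x) = J(x) + (1-ε) Q(x)`. -/
noncomputable def Smat (d L : ℕ) (Ec ε : ℝ) (x : Site d L → ℝ) :
    Matrix (Site d L) (Site d L) ℝ :=
  Jmat d L Ec ε x + (1 - ε) • Qmat d L Ec x

lemma theta_eq_zero_or_one (a : ℝ) : theta a = 0 ∨ theta a = 1 := by
  unfold theta; split_ifs <;> simp

lemma theta_nonneg (a : ℝ) : 0 ≤ theta a := by
  rcases theta_eq_zero_or_one a with h | h <;> simp [h]

section Lattice

variable {d L : ℕ}

lemma dLam_eq_one_elim {l k : Site d L} (h : dLam l k = 1) {n : Fin d} (hn : l n ≠ k n) :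
    (∀ m ≠ n, l m = k m) ∧ ((l n : ℤ) - (k n : ℤ)).natAbs = 1 := by
  have hsplit := Finset.add_sum_erase univ (fun m => ((l m : ℤ) - (k m : ℤ)).natAbs) (mem_univ n)
  rw [← dLam, h] at hsplit
  have hn_pos : ((l n : ℤ) - (k n : ℤ)).natAbs ≠ 0 := by
    simpa [sub_eq_zero, Fin.val_inj] using hn
  have hrest : ∑ m ∈ univ.erase n, ((l m : ℤ) - (k m : ℤ)).natAbs = 0 := by omega
  refine ⟨fun m hm => ?_, by omega⟩
  have hm0 := (Finset.sum_eq_zero_iff).1 hrest m (mem_erase.2 ⟨hm, mem_univ m⟩)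
  simpa [sub_eq_zero, Fin.val_inj] using hm0

lemma card_neighbors_ne_coord_le (k : Site d L) (n : Fin d) :
    #{l | dLam l k = 1 ∧ l n ≠ k n} ≤ 2 := by
  calc #{l | dLam l k = 1 ∧ l n ≠ k n}
      ≤ #({(k n : ℤ) - 1, (k n : ℤ) + 1} : Finset ℤ) := by
        refine card_le_card_of_injOn (fun l => (l n : ℤ)) ?_ ?_
        · intro l hl
          simp only [coe_filter, mem_univ, true_and, Set.mem_ofPred_eq] at hl
          have := (dLam_eq_one_elim hl.1 hl.2).2
          simp only [coe_insert, coe_singleton, Set.mem_insert_iff, Set.mem_singleton_iff]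
          omega
        · intro l₁ hl₁ l₂ hl₂ heq
          simp only [coe_filter, mem_univ, true_and, Set.mem_ofPred_eq] at hl₁ hl₂
          have hn : l₁ n = l₂ n := Fin.ext (Nat.cast_injective heq)
          funext m
          by_cases hm : m = n
          · rw [hm, hn]
          · rw [(dLam_eq_one_elim hl₁.1 hl₁.2).1 m hm, (dLam_eq_one_elim hl₂.1 hl₂.2).1 m hm]
    _ ≤ 2 := card_le_two

lemma card_neighbors_le (k : Site d L) : #{l | dLam l k = 1} ≤ 2 * d := by
  have hcover : ({l | dLam l k = 1} : Finset (Site d L)) ⊆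
      univ.biUnion fun n => {l | dLam l k = 1 ∧ l n ≠ k n} := by
    intro l hl
    simp only [mem_filter, mem_univ, true_and] at hl
    have hne : l ≠ k := by
      rintro rfl
      simp [dLam] at hl
    obtain ⟨n, hn⟩ := Function.ne_iff.1 hne
    simp only [mem_biUnion, mem_univ, mem_filter, true_and]
    exact ⟨n, hl, hn⟩
  calc #{l | dLam l k = 1}
      ≤ ∑ n : Fin d, #{l | dLam l k = 1 ∧ l n ≠ k n} := (card_le_card hcover).trans card_biUnion_le
    _ ≤ ∑ _n : Fin d, 2 := sum_le_sum fun n _ => card_neighbors_ne_coord_le k n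
    _ = 2 * d := by simp [mul_comm]

end Lattice

section Relaxation

variable {d L : ℕ} {Ec ε : ℝ}

lemma zhangF_eq_mulVec (x : Site d L → ℝ) : zhangF d L Ec ε x = (Smat d L Ec ε x).mulVec x := by
  funext i
  simp only [zhangF, Smat, Jmat, Qmat, mulVec, dotProduct, Matrix.add_apply, Matrix.smul_apply,
    diagonal_apply, smul_eq_mul, add_mul, ite_mul, zero_mul, mul_ite, mul_zero, sum_add_distrib,
    sum_ite_eq, mem_univ, if_true, ← sum_filter, mul_sum]
  congr 1
  · ring
  · exact sum_congr rfl fun j _ => by ring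

lemma Qmat_nonneg (x : Site d L → ℝ) (l k : Site d L) : 0 ≤ Qmat d L Ec x l k := by
  unfold Qmat
  split_ifs
  · exact mul_nonneg (by positivity) (theta_nonneg _)
  · exact le_rfl

lemma sum_Qmat_col_le (x : Site d L → ℝ) (k : Site d L) :
    ∑ l, Qmat d L Ec x l k ≤ theta (x k - Ec) := by
  have hcard : (#{l | dLam l k = 1} : ℝ) ≤ 2 * d := by exact_mod_cast card_neighbors_le k
  calc ∑ l, Qmat d L Ec x l k = #{l | dLam l k = 1} / (2 * d) * theta (x k - Ec) := by
        simp only [Qmat, ← sum_filter, sum_const, nsmul_eq_mul]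
        ring
    _ ≤ 1 * theta (x k - Ec) :=
        mul_le_mul_of_nonneg_right (div_le_one_of_le₀ hcard (by positivity)) (theta_nonneg _)
    _ = theta (x k - Ec) := one_mul _

lemma Smat_nonneg (hε0 : 0 ≤ ε) (hε1 : ε ≤ 1) (x : Site d L → ℝ) (l k : Site d L) : 0 ≤ Smat d L Ec ε x l k := by
  have hJ : 0 ≤ 1 - (1 - ε) * theta (x l - Ec) := by
    rcases theta_eq_zero_or_one (x l - Ec) with h | h <;> rw [h] <;> linarith
  have hQ := mul_nonneg (sub_nonneg.2 hε1) (Qmat_nonneg (Ec := Ec) x l k)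
  simp only [Smat, Jmat, Matrix.add_apply, Matrix.smul_apply, diagonal_apply, smul_eq_mul]
  split_ifs <;> linarith

lemma sum_abs_Smat_col_le_one (hε0 : 0 ≤ ε) (hε1 : ε ≤ 1) (x : Site d L → ℝ) (k : Site d L) :
    ∑ l, |Smat d L Ec ε x l k| ≤ 1 := by
  have hQ := mul_le_mul_of_nonneg_left (sum_Qmat_col_le (Ec := Ec) x k) (sub_nonneg.2 hε1)
  calc ∑ l, |Smat d L Ec ε x l k| = ∑ l, Smat d L Ec ε x l k :=
        sum_congr rfl fun l _ => abs_of_nonneg (Smat_nonneg hε0 hε1 x l k)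
    _ = 1 - (1 - ε) * theta (x k - Ec) + (1 - ε) * ∑ l, Qmat d L Ec x l k := by
        simp [Smat, Jmat, diagonal_apply, sum_add_distrib, mul_sum]
    _ ≤ 1 := by linarith

end Relaxation

theorem zhang_relaxation_is_linear_general
    (d L : ℕ)
    (Ec ε : ℝ) (hε0 : 0 ≤ ε) (hε1 : ε < 1)
    (x : Site d L → ℝ) :
    zhangF d L Ec ε x = (Smat d L Ec ε x).mulVec x ∧
      ∀ k, ∑ l, |Smat d L Ec ε x l k| ≤ 1 :=
  ⟨zhangF_eq_mulVec x, sum_abs_Smat_col_le_one hε0 hε1.le x⟩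

theorem zhang_relaxation_is_linear
    (d L : ℕ) (hd : 0 < d) (hL : 0 < L)
    (Ec ε : ℝ) (hEc : 0 < Ec) (hε0 : 0 ≤ ε) (hε1 : ε < 1)
    (x : Site d L → ℝ) (hx : ∀ i, 0 ≤ x i) :
    zhangF d L Ec ε x = (Smat d L Ec ε x).mulVec x ∧
      ∀ k, ∑ l, |Smat d L Ec ε x l k| ≤ 1 :=
  zhang_relaxation_is_linear_general d L Ec ε hε0 hε1 x
end

section
/- Let (M, f₁, …, f_N) be an iterated function system of piecewise continuous, strictly contracting maps on a compact metric space, with attractor Y satisfying Y = f₁(Y) ∪ … ∪ f_N(Y). Suppose each f_i has the property that the covering number satisfies 𝔑(f_i(Y), δ) ≤ ϑ_i 𝔑(Y, δ/s_i⁺), where 0 < s_i⁺ < 1 is the Lipschitz constant of f_i and ϑ_i ≥ 1 is the multiplicity of its continuity partition on Y. Then the upper box dimension of Y is at most the unique solution β of Σ_{i=1}^N ϑ_i (s_i⁺)^β = 1. -/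
open Filter Finset

/-- `covN X δ`: the minimal cardinality of a cover of `X` by balls of radius `δ`. -/
noncomputable def covN {M : Type*} [MetricSpace M] (X : Set M) (δ : ℝ) : ℕ :=
  sInf {n : ℕ | ∃ s : Finset M, s.card = n ∧ X ⊆ ⋃ y ∈ s, Metric.ball y δ}

/-- Upper box dimension of a subset of a metric space. -/
noncomputable def upperBoxDim {M : Type*} [MetricSpace M] (X : Set M) : ℝ :=
  limsup (fun δ : ℝ => Real.log (covN X δ) / Real.log (1 / δ)) (nhdsWithin 0 (Set.Ioi 0))

/-!
With `σ(δ) = 𝔑(Y, δ) δ^β`, subadditivity of covering numbers over `Y = ⋃ fᵢ(Y)` and the hypothesis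
on the pieces give `σ(δ) ≤ ∑ ϑᵢ sᵢ^β σ(δ / sᵢ)`: by the choice of `β` a convex combination of values
of `σ` at larger scales. So `σ` stays bounded as `δ → 0` by its bound on a fixed window of large
scales, where one ball covers `Y`; thus `𝔑(Y, δ) = O(δ^(-β))` and `dim̄_B Y ≤ β`.
-/

open Metric Topology

section CoveringNumber

variable {M : Type*} [MetricSpace M] {X : Set M} {δ : ℝ}

lemma covN_le_card {t : Finset M} (h : X ⊆ ⋃ y ∈ t, ball y δ) : covN X δ ≤ t.card :=
  Nat.sInf_le ⟨t, rfl, h⟩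

-- Without total boundedness no finite cover need exist, and then `covN X δ = sInf ∅ = 0`.
lemma exists_card_eq_covN (hX : TotallyBounded X) (hδ : 0 < δ) :
    ∃ t : Finset M, t.card = covN X δ ∧ X ⊆ ⋃ y ∈ t, ball y δ := by
  obtain ⟨t, ht, hXt⟩ := Metric.totallyBounded_iff.mp hX δ hδ
  have hS : {n : ℕ | ∃ t : Finset M, t.card = n ∧ X ⊆ ⋃ y ∈ t, ball y δ}.Nonempty :=
    ⟨ht.toFinset.card, ht.toFinset, rfl, by simpa using hXt⟩
  exact Nat.sInf_mem hS

lemma one_le_covN (hX : TotallyBounded X) (hne : X.Nonempty) (hδ : 0 < δ) : 1 ≤ covN X δ := by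
  obtain ⟨t, ht, hXt⟩ := exists_card_eq_covN hX hδ
  obtain ⟨x, hx⟩ := hne
  obtain ⟨y, hy, -⟩ := Set.mem_iUnion₂.mp (hXt hx)
  exact ht ▸ Finset.card_pos.mpr ⟨y, hy⟩

lemma covN_le_one_of_diam_lt (hX : Bornology.IsBounded X) (h : diam X < δ) : covN X δ ≤ 1 := by
  rcases X.eq_empty_or_nonempty with rfl | ⟨x, hx⟩
  · exact (covN_le_card (t := ∅) (by simp)).trans (by simp)
  · refine (covN_le_card (t := {x}) fun y hy => ?_).trans (by simp)
    simpa using (dist_le_diam_of_mem hX hy hx).trans_lt h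

lemma covN_iUnion_le_sum {ι : Type*} [Fintype ι] {A : ι → Set M} (hA : ∀ i, TotallyBounded (A i))
    (hδ : 0 < δ) : covN (⋃ i, A i) δ ≤ ∑ i, covN (A i) δ := by
  classical
  choose t ht hAt using fun i => exists_card_eq_covN (hA i) hδ
  have hcover : ⋃ i, A i ⊆ ⋃ y ∈ univ.biUnion t, ball y δ := Set.iUnion_subset fun i x hx => by
    obtain ⟨y, hy, hxy⟩ := Set.mem_iUnion₂.mp (hAt i hx)
    exact Set.mem_iUnion₂.mpr ⟨y, Finset.mem_biUnion.mpr ⟨i, Finset.mem_univ i, hy⟩, hxy⟩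
  calc covN (⋃ i, A i) δ ≤ (univ.biUnion t).card := covN_le_card hcover
    _ ≤ ∑ i, (t i).card := Finset.card_biUnion_le
    _ = ∑ i, covN (A i) δ := by simp only [ht]

lemma covN_mul_rpow_le_sum_of_eq_iUnion {ι : Type*} [Fintype ι] {Y : Set M} {f : ι → M → M}
    {s : ι → ℝ} {ϑ : ι → ℕ} (hYtb : TotallyBounded Y) (hY : Y = ⋃ i, f i '' Y)
    (hs0 : ∀ i, 0 < s i) (hcov : ∀ i, covN (f i '' Y) δ ≤ ϑ i * covN Y (δ / s i)) (hδ : 0 < δ)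
    (β : ℝ) :
    (covN Y δ : ℝ) * δ ^ β ≤ ∑ i, ϑ i * s i ^ β * (covN Y (δ / s i) * (δ / s i) ^ β) := by
  have hsub : (covN Y δ : ℝ) ≤ ∑ i, (ϑ i : ℝ) * covN Y (δ / s i) := by
    have h := covN_iUnion_le_sum (fun i => hYtb.subset (hY ▸ Set.subset_iUnion _ i)) hδ
    rw [← hY] at h
    exact_mod_cast h.trans (Finset.sum_le_sum fun i _ => hcov i)
  have hscale : ∀ i, s i ^ β * (δ / s i) ^ β = δ ^ β := fun i => by
    rw [Real.div_rpow hδ.le (hs0 i).le, mul_div_cancel₀ _ (Real.rpow_pos_of_pos (hs0 i) β).ne']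
  calc (covN Y δ : ℝ) * δ ^ β ≤ (∑ i, (ϑ i : ℝ) * covN Y (δ / s i)) * δ ^ β := by gcongr
    _ = _ := by
        rw [Finset.sum_mul]
        refine Finset.sum_congr rfl fun i _ => ?_
        rw [← hscale i]; ring

lemma upperBoxDim_le_of_covN_mul_rpow_le (hX : TotallyBounded X) (hne : X.Nonempty) {β C : ℝ}
    (h : ∀ᶠ δ in 𝓝[>] 0, (covN X δ : ℝ) * δ ^ β ≤ C) : upperBoxDim X ≤ β := by
  have hlog : Tendsto (fun δ : ℝ => Real.log (1 / δ)) (𝓝[>] 0) atTop := by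
    simpa only [one_div, Function.comp_def] using
      Real.tendsto_log_atTop.comp tendsto_inv_nhdsGT_zero
  have hbound : Tendsto (fun δ : ℝ => Real.log C / Real.log (1 / δ) + β) (𝓝[>] 0) (𝓝 β) := by
    simpa using (tendsto_const_nhds.div_atTop hlog).add_const β
  have hsmall : ∀ᶠ δ in 𝓝[>] (0 : ℝ), δ ∈ Set.Ioo 0 1 := Ioo_mem_nhdsGT one_pos
  have hratio_nonneg : ∀ᶠ δ in 𝓝[>] (0 : ℝ), 0 ≤ Real.log (covN X δ) / Real.log (1 / δ) := by
    filter_upwards [hsmall] with δ ⟨hδ0, hδ1⟩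
    exact div_nonneg (Real.log_natCast_nonneg _)
      (Real.log_nonneg (by rw [le_div_iff₀ hδ0]; linarith))
  have hratio_le : ∀ᶠ δ in 𝓝[>] (0 : ℝ),
      Real.log (covN X δ) / Real.log (1 / δ) ≤ Real.log C / Real.log (1 / δ) + β := by
    filter_upwards [hsmall, h] with δ ⟨hδ0, hδ1⟩ hδC
    have hL : 0 < Real.log (1 / δ) := Real.log_pos (by rw [lt_div_iff₀ hδ0]; linarith)
    have hcov : (0 : ℝ) < covN X δ := by exact_mod_cast one_le_covN hX hne hδ0
    have hprod := Real.log_le_log (by positivity) hδC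
    rw [Real.log_mul hcov.ne' (Real.rpow_pos_of_pos hδ0 β).ne', Real.log_rpow hδ0] at hprod
    rw [div_add' _ _ _ hL.ne', div_le_div_iff_of_pos_right hL, one_div, Real.log_inv]
    linarith
  calc upperBoxDim X
      ≤ limsup (fun δ : ℝ => Real.log C / Real.log (1 / δ) + β) (𝓝[>] 0) :=
        limsup_le_limsup hratio_le (isCoboundedUnder_le_of_eventually_le _ hratio_nonneg)
          hbound.isBoundedUnder_le
    _ = β := hbound.limsup_eq

end CoveringNumber

/-- Since `s i ≤ q < 1`, the bound on `[r * δ₀ * q ^ n, δ₀]` passes to `[r * δ₀ * q ^ (n + 1), δ₀]`: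
the scales `δ / s i` used by the convex combination lie in the former interval. -/
lemma le_of_le_sum_mul_comp_div {ι : Type*} [Fintype ι] {G : ℝ → ℝ} {p s : ι → ℝ}
    {r δ₀ K : ℝ} (hr : 0 < r) (hrs : ∀ i, r ≤ s i) (hs1 : ∀ i, s i < 1)
    (hp : ∀ i, 0 ≤ p i) (hp1 : ∑ i, p i = 1)
    (hrec : ∀ δ, 0 < δ → δ < r * δ₀ → G δ ≤ ∑ i, p i * G (δ / s i))
    (hbase : ∀ δ, r * δ₀ ≤ δ → δ ≤ δ₀ → G δ ≤ K) {δ : ℝ} (hδ : 0 < δ) (hδδ₀ : δ ≤ δ₀) :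
    G δ ≤ K := by
  obtain ⟨q, hsq, hq0, hq1⟩ :=
    ((eventually_all.mpr fun i => Ioo_mem_nhdsLT (hs1 i)).and (Ioo_mem_nhdsLT one_pos)).exists
  have hs0 : ∀ i, 0 < s i := fun i => hr.trans_le (hrs i)
  have hδ₀ : 0 < δ₀ := hδ.trans_le hδδ₀
  have key : ∀ n : ℕ, ∀ δ, 0 < δ → r * δ₀ * q ^ n ≤ δ → δ ≤ δ₀ → G δ ≤ K := by
    intro n
    induction n with
    | zero => exact fun δ _ hlow hδδ₀ => hbase δ (by simpa using hlow) hδδ₀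
    | succ n ih =>
      intro δ hδ hlow hδδ₀
      rcases le_or_gt (r * δ₀) δ with hδr | hδr
      · exact hbase δ hδr hδδ₀
      have hlarger : ∀ i, G (δ / s i) ≤ K := fun i => by
        refine ih _ (div_pos hδ (hs0 i)) ?_ ?_
        · calc r * δ₀ * q ^ n = r * δ₀ * q ^ (n + 1) / q := by field_simp; ring
            _ ≤ δ / q := by gcongr
            _ ≤ δ / s i := div_le_div_of_nonneg_left hδ.le (hs0 i) (hsq i).1.le
        · rw [div_le_iff₀ (hs0 i)]
          nlinarith [hrs i]
      calc G δ ≤ ∑ i, p i * G (δ / s i) := hrec δ hδ hδr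
        _ ≤ ∑ i, p i * K := by gcongr with i; exacts [hp i, hlarger i]
        _ = K := by rw [← Finset.sum_mul, hp1, one_mul]
  obtain ⟨n, hn⟩ := exists_pow_lt_of_lt_one (div_pos hδ (mul_pos hr hδ₀)) hq1
  refine key n δ hδ ?_ hδδ₀
  rw [lt_div_iff₀ (mul_pos hr hδ₀)] at hn
  linarith

lemma nonneg_of_sum_mul_rpow_eq_one {ι : Type*} [Fintype ι] {ϑ s : ι → ℝ} {β : ℝ}
    (hϑ : ∀ i, 1 ≤ ϑ i) (hs0 : ∀ i, 0 < s i) (hs1 : ∀ i, s i < 1)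
    (hβ : ∑ i, ϑ i * s i ^ β = 1) : 0 ≤ β := by
  by_contra! hneg
  obtain ⟨i, -⟩ : (univ : Finset ι).Nonempty :=
    Finset.nonempty_of_sum_ne_zero (hβ ▸ one_ne_zero)
  have hi : 1 < ϑ i * s i ^ β :=
    one_lt_mul_of_le_of_lt (hϑ i) ((Real.one_lt_rpow_iff_of_pos (hs0 i)).mpr (Or.inr ⟨hs1 i, hneg⟩))
  have := Finset.single_le_sum (f := fun i => ϑ i * s i ^ β)
    (fun j _ => mul_nonneg (zero_le_one.trans (hϑ j)) (Real.rpow_nonneg (hs0 j).le β))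
    (Finset.mem_univ i)
  linarith

theorem ifs_upper_box_dim_le_general
    {M : Type*} [MetricSpace M]
    (N : ℕ) (f : Fin N → M → M)
    (s : Fin N → ℝ) (hs0 : ∀ i, 0 < s i) (hs1 : ∀ i, s i < 1)
    (ϑ : Fin N → ℕ) (hϑ : ∀ i, 1 ≤ ϑ i)
    (Y : Set M) (hYne : Y.Nonempty) (hYc : IsCompact Y)
    (hY : Y = ⋃ i, f i '' Y)
    (hcov : ∀ i, ∀ δ : ℝ, 0 < δ → covN (f i '' Y) δ ≤ ϑ i * covN Y (δ / s i))
    (β : ℝ) (hβ : ∑ i, (ϑ i : ℝ) * s i ^ β = 1) :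
    upperBoxDim Y ≤ β := by
  have hYtb := hYc.totallyBounded
  have hβ0 : 0 ≤ β := nonneg_of_sum_mul_rpow_eq_one (by exact_mod_cast hϑ) hs0 hs1 hβ
  obtain ⟨r, hrs, hr⟩ :=
    ((eventually_all.mpr fun i => Ioo_mem_nhdsGT (hs0 i)).and self_mem_nhdsWithin).exists
  set δ₀ := (diam Y + 1) / r
  have hbase : ∀ δ, r * δ₀ ≤ δ → δ ≤ δ₀ → (covN Y δ : ℝ) * δ ^ β ≤ δ₀ ^ β := fun δ hrδ hδδ₀ => by
    have hδ : 0 < δ := lt_of_lt_of_le (by positivity) hrδ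
    have hone : (covN Y δ : ℝ) ≤ 1 := by
      refine mod_cast covN_le_one_of_diam_lt hYc.isBounded ?_
      rw [mul_div_cancel₀ _ (ne_of_gt hr)] at hrδ
      linarith
    calc (covN Y δ : ℝ) * δ ^ β ≤ 1 * δ₀ ^ β := by gcongr
      _ = δ₀ ^ β := one_mul _
  refine upperBoxDim_le_of_covN_mul_rpow_le hYtb hYne (C := δ₀ ^ β) ?_
  filter_upwards [Ioc_mem_nhdsGT (show 0 < δ₀ by positivity)] with δ ⟨hδ, hδδ₀⟩
  exact le_of_le_sum_mul_comp_div hr (fun i => (hrs i).2.le) hs1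
    (fun i => mul_nonneg (Nat.cast_nonneg _) (Real.rpow_nonneg (hs0 i).le β)) hβ
    (fun δ hδ _ => covN_mul_rpow_le_sum_of_eq_iUnion hYtb hY hs0 (hcov · δ hδ) hδ β) hbase hδ hδδ₀

theorem ifs_upper_box_dim_le
    {M : Type*} [MetricSpace M] [CompactSpace M]
    (N : ℕ) (hN : 0 < N) (f : Fin N → M → M)
    (s : Fin N → ℝ) (hs0 : ∀ i, 0 < s i) (hs1 : ∀ i, s i < 1)
    (hLip : ∀ i x y, dist (f i x) (f i y) ≤ s i * dist x y)
    (ϑ : Fin N → ℕ) (hϑ : ∀ i, 1 ≤ ϑ i)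
    (Y : Set M) (hYne : Y.Nonempty) (hYc : IsCompact Y)
    (hY : Y = ⋃ i, f i '' Y)
    (hcov : ∀ i, ∀ δ : ℝ, 0 < δ → covN (f i '' Y) δ ≤ ϑ i * covN Y (δ / s i))
    (β : ℝ) (hβ : ∑ i, (ϑ i : ℝ) * s i ^ β = 1) :
    upperBoxDim Y ≤ β :=
  ifs_upper_box_dim_le_general N f s hs0 hs1 ϑ hϑ Y hYne hYc hY hcov β hβ
end

section
/- Let A be the 6×6 0–1 matrix with rows (0,1,0,0,1,0), (0,0,1,0,0,1), (1,0,0,1,0,0), (0,0,1,0,0,1), (1,0,0,1,0,0), (0,1,0,0,1,0). Then A is irreducible (the associated directed graph is strongly connected), its spectrum is {−1, −1, 0, 0, 0, 2}, and hence the topological entropy of the associated topological Markov chain (Σ_A⁺, σ_A⁺) equals log 2. -/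
/-!
Columns `j` and `j + 3` of `Amat` coincide, so `Amat = L * R` with `L` its first three columns
and `R = [1 | 1]`. The product `R * L` is the adjacency matrix of the complete graph `K₃`, with
characteristic polynomial `(X - 2) * (X + 1) ^ 2`, and `charpoly (L * R) = X ^ 3 * charpoly (R * L)`.
Every row of `Amat` sums to `2`, so the entries of `Amat ^ n` add up to `6 * 2 ^ n`, which gives
the growth rate `log 2`. Irreducibility holds because `Amat ^ 3` is the all-ones matrix plus `Amat`.
-/

open Matrix Polynomial Filter

/-- The transition matrix of the symbolic coding of the `N = 2` Zhang model
on its three-point attractor (Example A). -/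
def Amat : Matrix (Fin 6) (Fin 6) ℝ :=
  !![0,1,0,0,1,0;
     0,0,1,0,0,1;
     1,0,0,1,0,0;
     0,0,1,0,0,1;
     1,0,0,1,0,0;
     0,1,0,0,1,0]

open Topology

theorem charpoly_adjMatrix_completeGraph {R : Type*} [CommRing R] (k : ℕ) :
    ((SimpleGraph.completeGraph (Fin (k + 1))).adjMatrix R).charpoly =
      (X - C (k : R)) * (X + 1) ^ k := by
  have h_ones : (of 1 : Matrix (Fin (k + 1)) (Fin (k + 1)) R) = vecMulVec 1 1 := by
    ext; simp [vecMulVec_apply]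
  rw [SimpleGraph.adjMatrix_completeGraph_eq_of_one_sub_one, h_ones,
    ← map_one (scalar (Fin (k + 1))), charpoly_sub_scalar, charpoly_vecMulVec, one_dotProduct_one]
  simp only [Fintype.card_fin, add_tsub_cancel_right, sub_comp, pow_comp, X_comp, map_one,
    smul_eq_C_mul, mul_comp, Nat.cast_succ, map_add, map_natCast, add_comp, one_comp,
    natCast_comp]
  ring

theorem Matrix.pow_mulVec_of_mulVec_eq_smul {n R : Type*} [Fintype n] [DecidableEq n]
    [CommSemiring R] {A : Matrix n n R} {v : n → R} {r : R} (h : A *ᵥ v = r • v) (k : ℕ) :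
    (A ^ k) *ᵥ v = r ^ k • v := by
  induction k with
  | zero => simp
  | succ k ih => rw [pow_succ', ← mulVec_mulVec, ih, mulVec_smul, h, smul_smul, pow_succ]

theorem Matrix.sum_pow_apply_of_mulVec_one_eq_smul {n R : Type*} [Fintype n] [DecidableEq n]
    [CommSemiring R] {A : Matrix n n R} {r : R} (h : A *ᵥ 1 = r • 1) (k : ℕ) :
    ∑ i, ∑ j, (A ^ k) i j = Fintype.card n * r ^ k := by
  have h_row (i : n) : ∑ j, (A ^ k) i j = r ^ k := by
    simpa [mulVec, dotProduct] using congrFun (pow_mulVec_of_mulVec_eq_smul h k) i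
  simp [h_row]

theorem tendsto_log_mul_pow_div {c r : ℝ} (hc : c ≠ 0) (hr : r ≠ 0) :
    Tendsto (fun n : ℕ => Real.log (c * r ^ n) / n) atTop (𝓝 (Real.log r)) := by
  have h_eq : ∀ᶠ n : ℕ in atTop, Real.log c / n + Real.log r = Real.log (c * r ^ n) / n := by
    filter_upwards [eventually_ne_atTop 0] with n hn
    rw [Real.log_mul hc (pow_ne_zero n hr), Real.log_pow]
    field_simp
  simpa using ((tendsto_const_div_atTop_nhds_zero_nat (Real.log c)).add_const
    (Real.log r)).congr' h_eq

def Amat.leftFactor : Matrix (Fin 6) (Fin 3) ℝ :=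
  !![0,1,0; 0,0,1; 1,0,0; 0,0,1; 1,0,0; 0,1,0]

def Amat.rightFactor : Matrix (Fin 3) (Fin 6) ℝ :=
  !![1,0,0,1,0,0; 0,1,0,0,1,0; 0,0,1,0,0,1]

theorem Amat_eq_leftFactor_mul_rightFactor : Amat = Amat.leftFactor * Amat.rightFactor := by
  ext i j
  fin_cases i <;> fin_cases j <;>
    simp [Amat, Amat.leftFactor, Amat.rightFactor, mul_apply, Fin.sum_univ_succ]

theorem Amat.rightFactor_mul_leftFactor :
    Amat.rightFactor * Amat.leftFactor = (SimpleGraph.completeGraph (Fin 3)).adjMatrix ℝ := by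
  rw [SimpleGraph.adjMatrix_completeGraph_eq_of_one_sub_one]
  ext i j
  fin_cases i <;> fin_cases j <;>
    simp [Amat.leftFactor, Amat.rightFactor, mul_apply, Fin.sum_univ_succ, one_apply]

theorem Amat_charpoly : Amat.charpoly = (X - C 2) * (X + C 1) ^ 2 * X ^ 3 := by
  rw [Amat_eq_leftFactor_mul_rightFactor, charpoly_mul_comm_of_le _ _ (by simp),
    Amat.rightFactor_mul_leftFactor, charpoly_adjMatrix_completeGraph 2]
  simp only [Fintype.card_fin, Nat.reduceSub, Nat.cast_ofNat, map_one]
  ring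

theorem Amat_pow_three : Amat ^ 3 = of 1 + Amat := by
  ext i j
  fin_cases i <;> fin_cases j <;> simp [pow_three, mul_apply, Fin.sum_univ_succ, Amat]

theorem Amat_pow_three_pos (i j : Fin 6) : 0 < (Amat ^ 3) i j := by
  rw [Amat_pow_three]
  fin_cases i <;> fin_cases j <;> norm_num [Amat]

theorem Amat_mulVec_one : Amat *ᵥ 1 = (2 : ℝ) • 1 := by
  ext i
  fin_cases i <;> simp [Amat, mulVec, dotProduct, Fin.sum_univ_succ] <;> norm_num

theorem Amat_irreducible_spectrum_entropy :
    (∀ i j : Fin 6, ∃ n : ℕ, 0 < n ∧ 0 < (Amat ^ n) i j) ∧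
      Amat.charpoly = (X - C 2) * (X + C 1) ^ 2 * X ^ 3 ∧
      Tendsto (fun n : ℕ => Real.log (∑ i, ∑ j, (Amat ^ n) i j) / n) atTop
        (nhds (Real.log 2)) := by
  refine ⟨fun i j => ⟨3, three_pos, Amat_pow_three_pos i j⟩, Amat_charpoly, ?_⟩
  simp_rw [sum_pow_apply_of_mulVec_one_eq_smul Amat_mulVec_one]
  exact tendsto_log_mul_pow_div (by norm_num) two_ne_zero
end
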